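/- arXiv:2201.00640 — 3 statements merged into one kernel-verified Lean document; each statement's English description precedes it below -/
import Mathlib

section
/- Let a_n denote the number of decorated Dyck paths of length 2n having no peak at level 1. Then the formal power series Y(x) = \sum_{n\ge 0} a_n x^n (with integer coefficients) satisfies the algebraic equation x(3+x)\,Y(x)^2 - 2(1-x^2)\,Y(x) + (x-1)(x-2) = 0 in the ring of formal power series over the integers. -/
/-- A step of a decorated path: up, black down, or red down. -/
inductive Step : Type
  | U : Step
  | D : Step
  | R : Step
  deriving DecidableEq

/-- The height change of a step. -/
def stepVal : Step → ℤ
  | Step.U => 1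
  | Step.D => -1
  | Step.R => -1

/-- The final height of a word of steps. -/
def height (w : List Step) : ℤ := (w.map stepVal).sum

/-- A decorated path: all prefixes have nonnegative height, `U` is never
immediately followed by `R`, and `R` is never immediately followed by `U`. -/
def IsDecoratedPath (w : List Step) : Prop :=
  (∀ p : List Step, p <+: w → 0 ≤ height p) ∧
    ¬ [Step.U, Step.R] <:+: w ∧ ¬ [Step.R, Step.U] <:+: w

/-- A decorated Dyck path: a decorated path with final height 0. -/
def IsDecoratedDyck (w : List Step) : Prop :=
  IsDecoratedPath w ∧ height w = 0

/-- The path has a peak at level 1: some `U` taken from height 0 is immediately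
followed by a down-step (`D` or `R`). -/
def HasPeakAtLevelOne (w : List Step) : Prop :=
  ∃ p q : List Step, ∃ d : Step, (d = Step.D ∨ d = Step.R) ∧
    w = p ++ Step.U :: d :: q ∧ height p = 0

/-- The number of decorated Dyck paths of length `2 * n` having no peak at level 1. -/
noncomputable def a (n : ℕ) : ℕ :=
  Nat.card {w : List Step // w.length = 2 * n ∧ IsDecoratedDyck w ∧ ¬ HasPeakAtLevelOne w}

/-!
Cutting a nonempty decorated Dyck path at its first return to level `0` writes it uniquely as
`U p d q` with `p`, `q` decorated Dyck paths and `d` a down-step; the colour rules say exactly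
that `d = R` forces `p ≠ []` and `q = []`. A peak at level 1 of `U p d q` is either `p = []` or a
peak at level 1 of `q`. With `B` and `B' = B - 1` the generating functions of all and of nonempty
decorated Dyck paths this gives `B = 1 + x B² + x B'` and `Y = 1 + x B' Y + x B'`; eliminating
`x B' = (Y - 1) / (Y + 1)` leaves the quadratic equation for `Y`.
-/

open List

lemma List.prefix_append_iff {α : Type*} {r l m : List α} :
    r <+: l ++ m ↔ r <+: l ∨ ∃ t, r = l ++ t ∧ t <+: m := by
  constructor
  · rintro ⟨s, hs⟩
    rcases append_eq_append_iff.mp hs with ⟨b, rfl, -⟩ | ⟨c, rfl, hc⟩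
    · exact .inl (prefix_append _ _)
    · exact .inr ⟨c, rfl, s, hc.symm⟩
  · rintro (h | ⟨t, rfl, ht⟩)
    · exact h.trans (prefix_append _ _)
    · exact (prefix_append_right_inj l).mpr ht

namespace Step

instance : Fintype Step := ⟨{U, D, R}, by rintro ⟨⟩ <;> simp⟩

def Compatible : Step → Step → Prop
  | U, R => False
  | R, U => False
  | _, _ => True

end Step

open Step

@[simp] lemma stepVal_U : stepVal U = 1 := rfl
@[simp] lemma stepVal_D : stepVal D = -1 := rfl
@[simp] lemma stepVal_R : stepVal R = -1 := rfl

lemma stepVal_eq_neg_one_iff {s : Step} : stepVal s = -1 ↔ s = D ∨ s = R := by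
  cases s <;> simp

@[simp] lemma height_nil : height [] = 0 := rfl

@[simp] lemma height_cons (s : Step) (w : List Step) :
    height (s :: w) = stepVal s + height w := by simp [height]

@[simp] lemma height_append (v w : List Step) :
    height (v ++ w) = height v + height w := by simp [height]

lemma height_add_length (w : List Step) : height w + w.length = 2 * w.count U := by
  induction w with
  | nil => simp
  | cons s w ih => cases s <;> simp <;> omega

def IsDyck (w : List Step) : Prop :=
  (∀ r, r <+: w → 0 ≤ height r) ∧ height w = 0

lemma isDyck_nil : IsDyck [] :=
  ⟨fun r hr => by simp [prefix_nil.mp hr], rfl⟩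

lemma IsDyck.even_length {w : List Step} (h : IsDyck w) : Even w.length :=
  ⟨w.count U, by have := height_add_length w; rw [h.2] at this; omega⟩

lemma IsDyck.eq_U_of_mem_head? {w : List Step} (h : IsDyck w) : ∀ x ∈ w.head?, x = U := by
  rcases w with _ | ⟨x, w⟩
  · simp
  · have := h.1 [x] (by simp)
    cases x <;> simp_all

lemma IsDyck.stepVal_eq_of_mem_getLast? {w : List Step} (h : IsDyck w) : ∀ x ∈ w.getLast?, stepVal x = -1 := by
  rcases w.eq_nil_or_concat' with rfl | ⟨l, x, rfl⟩
  · simp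
  · have hl := h.1 l (prefix_append _ _)
    have hx : height l + stepVal x = 0 := by simpa using h.2
    cases x <;> simp at hx ⊢
    omega

def glue (d : Step) (p q : List Step) : List Step := U :: (p ++ d :: q)

lemma glue_ne_nil {d : Step} {p q : List Step} : glue d p q ≠ [] := nofun

lemma isDyck_glue {d : Step} {p q : List Step} (hp : IsDyck p) (hq : IsDyck q)
    (hd : stepVal d = -1) : IsDyck (glue d p q) := by
  refine ⟨fun r hr => ?_, by simp [glue, hp.2, hq.2, hd]⟩
  rcases prefix_cons_iff.mp hr with rfl | ⟨r₁, rfl, hr₁⟩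
  · simp
  rcases prefix_append_iff.mp hr₁ with hr₂ | ⟨r₂, rfl, hr₂⟩
  · simp only [height_cons, stepVal_U]; linarith [hp.1 r₁ hr₂]
  rcases prefix_cons_iff.mp hr₂ with rfl | ⟨r₃, rfl, hr₃⟩
  · simp [hp.2]
  · simp [hp.2, hd, hq.1 r₃ hr₃]

lemma exists_first_descent :
    ∀ (t : List Step) (h : ℤ), 0 ≤ h → h + height t < 0 →
      ∃ p d q, t = p ++ d :: q ∧ (∀ r, r <+: p → 0 ≤ h + height r) ∧ h + height p = 0 ∧
        stepVal d = -1
  | [], h, h0, ht => by simp only [height_nil, add_zero] at ht; omega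
  | s :: t, h, h0, ht => by
    by_cases hs : h + stepVal s < 0
    · refine ⟨[], s, t, rfl, fun r hr => by simp [prefix_nil.mp hr, h0], ?_⟩
      cases s <;> simp at hs ⊢ <;> omega
    · obtain ⟨p, d, q, rfl, hpre, hp, hd⟩ :=
        exists_first_descent t (h + stepVal s) (by omega) (by simp only [height_cons] at ht; omega)
      refine ⟨s :: p, d, q, rfl, fun r hr => ?_, by simp only [height_cons]; omega, hd⟩
      rcases prefix_cons_iff.mp hr with rfl | ⟨r', rfl, hr'⟩
      · simpa using h0
      · simp only [height_cons]; linarith [hpre r' hr']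

lemma IsDyck.exists_eq_glue {w : List Step} (hw : IsDyck w) (hne : w ≠ []) :
    ∃ d p q, stepVal d = -1 ∧ IsDyck p ∧ IsDyck q ∧ w = glue d p q := by
  obtain ⟨x, t, rfl⟩ := exists_cons_of_ne_nil hne
  obtain rfl : x = U := hw.eq_U_of_mem_head? x rfl
  have ht : height t = -1 := by have := hw.2; simp only [height_cons, stepVal_U] at this; omega
  obtain ⟨p, d, q, rfl, hpre, hp, hd⟩ := exists_first_descent t 0 le_rfl (by omega)
  refine ⟨d, p, q, hd, ⟨fun r hr => by simpa using hpre r hr, by simpa using hp⟩,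
    ⟨fun r hr => ?_, ?_⟩, rfl⟩
  · have := hw.1 (U :: (p ++ d :: r)) (by simpa using hr)
    simp only [height_cons, stepVal_U, height_append, hd, zero_add] at this hp; omega
  · simp only [height_append, height_cons, hd, zero_add] at ht hp; omega

lemma glue_inj {d d' : Step} {p p' q q' : List Step} (hp : IsDyck p) (hp' : IsDyck p')
    (hd : stepVal d = -1) (hd' : stepVal d' = -1) (h : glue d p q = glue d' p' q') :
    d = d' ∧ p = p' ∧ q = q' := by
  have key : ∀ {d p p' b}, IsDyck p → IsDyck p' → stepVal d = -1 → p' = p ++ d :: b →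
      False := fun hp hp' hd h => by
    have := hp'.1 _ (h ▸ (prefix_append_right_inj _).mpr (prefix_cons_iff.mpr
      (.inr ⟨[], rfl, nil_prefix⟩)))
    simp [hp.2, hd] at this
  simp only [glue, cons.injEq, true_and] at h
  rcases append_eq_append_iff.mp h with ⟨_ | ⟨z, b⟩, rfl, hb⟩ | ⟨_ | ⟨z, c⟩, rfl, hc⟩
  · simp_all
  · cases (cons.inj hb).1; exact (key hp hp' hd rfl).elim
  · simp_all
  · cases (cons.inj hc).1; exact (key hp' hp hd' rfl).elim

lemma isChain_compatible_iff {w : List Step} :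
    IsChain Compatible w ↔ ¬ [U, R] <:+: w ∧ ¬ [R, U] <:+: w := by
  rw [isChain_iff_forall_rel_of_append_cons_cons]
  constructor
  · exact fun h => ⟨fun ⟨s, t, hst⟩ => h (a := U) (b := R) (l₁ := s) (l₂ := t) (by simp [← hst]),
      fun ⟨s, t, hst⟩ => h (a := R) (b := U) (l₁ := s) (l₂ := t) (by simp [← hst])⟩
  · rintro ⟨h₁, h₂⟩ a b l₁ l₂ rfl
    cases a <;> cases b <;> simp only [Compatible]
    · exact h₁ ⟨l₁, l₂, by simp⟩
    · exact h₂ ⟨l₁, l₂, by simp⟩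

lemma isDecoratedDyck_iff {w : List Step} :
    IsDecoratedDyck w ↔ IsDyck w ∧ IsChain Compatible w := by
  rw [IsDecoratedDyck, IsDecoratedPath, IsDyck, isChain_compatible_iff]
  tauto

lemma isChain_compatible_glue_iff {d : Step} {p q : List Step} (hp : IsDyck p)
    (hq : IsDyck q) (hd : stepVal d = -1) :
    IsChain Compatible (glue d p q) ↔
      IsChain Compatible p ∧ IsChain Compatible q ∧ (d = R → p ≠ [] ∧ q = []) := by
  have hpU := hp.eq_U_of_mem_head?
  have hqU := hq.eq_U_of_mem_head?
  have hpd := hp.stepVal_eq_of_mem_getLast?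
  rw [glue, isChain_cons, isChain_append, isChain_cons]
  rcases p.eq_nil_or_concat' with rfl | ⟨l, x, rfl⟩ <;> rcases q with _ | ⟨y, q⟩ <;>
    cases d <;> (try cases x) <;> simp_all [Compatible]

lemma IsDecoratedDyck.isDyck {w : List Step} (h : IsDecoratedDyck w) : IsDyck w :=
  (isDecoratedDyck_iff.mp h).1

lemma isDecoratedDyck_nil : IsDecoratedDyck [] :=
  isDecoratedDyck_iff.mpr ⟨isDyck_nil, isChain_nil⟩

lemma isDecoratedDyck_glue_iff {d : Step} {p q : List Step} (hp : IsDyck p) (hq : IsDyck q)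
    (hd : stepVal d = -1) :
    IsDecoratedDyck (glue d p q) ↔
      IsDecoratedDyck p ∧ IsDecoratedDyck q ∧ (d = R → p ≠ [] ∧ q = []) := by
  simp only [isDecoratedDyck_iff, isChain_compatible_glue_iff hp hq hd]
  have := isDyck_glue hp hq hd
  tauto

lemma not_hasPeakAtLevelOne_nil : ¬ HasPeakAtLevelOne [] := by
  rintro ⟨p, q, d, -, h, -⟩
  simp at h

lemma hasPeakAtLevelOne_glue_iff {d : Step} {p q : List Step} (hp : IsDyck p)
    (hd : stepVal d = -1) :
    HasPeakAtLevelOne (glue d p q) ↔ p = [] ∨ HasPeakAtLevelOne q := by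
  constructor
  · rintro ⟨_ | ⟨y, r⟩, s, e, he, hw, hr⟩
    · left
      rcases p with _ | ⟨x, p⟩
      · rfl
      · obtain rfl := hp.eq_U_of_mem_head? x rfl
        simp only [glue, nil_append, cons_append, cons.injEq] at hw
        rcases he with rfl | rfl <;> simp at hw
    · simp only [glue, cons_append, cons.injEq] at hw
      obtain ⟨rfl, hw⟩ := hw
      replace hr : height r = -1 := by simp only [height_cons, stepVal_U] at hr; omega
      right
      rcases append_eq_append_iff.mp hw with ⟨_ | ⟨z, c⟩, rfl, hc⟩ | ⟨b, rfl, -⟩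
      · rw [stepVal_eq_neg_one_iff] at hd
        rcases hd with rfl | rfl <;> simp at hc
      · obtain ⟨rfl, rfl⟩ := cons.inj hc
        exact ⟨c, s, e, he, rfl, by simp only [height_append, hp.2, height_cons, hd, zero_add] at hr; omega⟩
      · linarith [hp.1 r (prefix_append _ _)]
  · rintro (rfl | ⟨r, s, e, he, rfl, hr⟩)
    · exact ⟨[], q, d, stepVal_eq_neg_one_iff.mp hd, rfl, rfl⟩
    · exact ⟨U :: (p ++ d :: r), s, e, he, by simp [glue], by simp [hp.2, hd, hr]⟩

lemma isDecoratedDyck_iff_glue {w : List Step} :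
    IsDecoratedDyck w ↔ w = [] ∨
      (∃ p q, IsDecoratedDyck p ∧ IsDecoratedDyck q ∧ w = glue D p q) ∨
      ∃ p q, (IsDecoratedDyck p ∧ p ≠ []) ∧ q = [] ∧ w = glue R p q := by
  constructor
  · intro hw
    rcases eq_or_ne w [] with rfl | hne
    · exact .inl rfl
    obtain ⟨d, p, q, hd, hp, hq, rfl⟩ := hw.isDyck.exists_eq_glue hne
    rw [isDecoratedDyck_glue_iff hp hq hd] at hw
    rcases stepVal_eq_neg_one_iff.mp hd with rfl | rfl
    · exact .inr (.inl ⟨p, q, hw.1, hw.2.1, rfl⟩)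
    · obtain ⟨hpne, rfl⟩ := hw.2.2 rfl
      exact .inr (.inr ⟨p, [], ⟨hw.1, hpne⟩, rfl, rfl⟩)
  · rintro (rfl | ⟨p, q, hp, hq, rfl⟩ | ⟨p, q, ⟨hp, hpne⟩, rfl, rfl⟩)
    · exact isDecoratedDyck_nil
    · exact (isDecoratedDyck_glue_iff hp.isDyck hq.isDyck rfl).mpr ⟨hp, hq, nofun⟩
    · exact (isDecoratedDyck_glue_iff hp.isDyck isDyck_nil rfl).mpr
        ⟨hp, isDecoratedDyck_nil, fun _ => ⟨hpne, rfl⟩⟩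

lemma isDecoratedDyck_and_not_hasPeakAtLevelOne_iff_glue {w : List Step} :
    IsDecoratedDyck w ∧ ¬ HasPeakAtLevelOne w ↔ w = [] ∨
      (∃ p q, (IsDecoratedDyck p ∧ p ≠ []) ∧ (IsDecoratedDyck q ∧ ¬ HasPeakAtLevelOne q) ∧
        w = glue D p q) ∨
      ∃ p q, (IsDecoratedDyck p ∧ p ≠ []) ∧ q = [] ∧ w = glue R p q := by
  rw [isDecoratedDyck_iff_glue]
  constructor
  · rintro ⟨rfl | ⟨p, q, hp, hq, rfl⟩ | ⟨p, q, hp, rfl, rfl⟩, hw⟩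
    · exact .inl rfl
    · rw [hasPeakAtLevelOne_glue_iff hp.isDyck rfl, not_or] at hw
      exact .inr (.inl ⟨p, q, ⟨hp, hw.1⟩, ⟨hq, hw.2⟩, rfl⟩)
    · exact .inr (.inr ⟨p, [], hp, rfl, rfl⟩)
  · rintro (rfl | ⟨p, q, hp, hq, rfl⟩ | ⟨p, q, hp, rfl, rfl⟩)
    · exact ⟨.inl rfl, not_hasPeakAtLevelOne_nil⟩
    · refine ⟨.inr (.inl ⟨p, q, hp.1, hq.1, rfl⟩), ?_⟩
      rw [hasPeakAtLevelOne_glue_iff hp.1.isDyck rfl]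
      exact not_or.mpr ⟨hp.2, hq.2⟩
    · refine ⟨.inr (.inr ⟨p, [], hp, rfl, rfl⟩), ?_⟩
      rw [hasPeakAtLevelOne_glue_iff hp.1.isDyck rfl]
      exact not_or.mpr ⟨hp.2, not_hasPeakAtLevelOne_nil⟩

open PowerSeries Finset

abbrev Words (P : List Step → Prop) (n : ℕ) := {w : List Step // w.length = 2 * n ∧ P w}

instance (P : List Step → Prop) (n : ℕ) : Finite (Words P n) :=
  ((List.finite_length_eq Step (2 * n)).subset fun _ hw => hw.1).to_subtype

noncomputable def gf (P : List Step → Prop) : PowerSeries ℤ :=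
  mk fun n => (Nat.card (Words P n) : ℤ)

lemma gf_or {P Q : List Step → Prop} (h : ∀ w, P w → ¬ Q w) :
    gf (fun w => P w ∨ Q w) = gf P + gf Q := by
  classical
  ext n
  simp only [gf, coeff_mk, map_add]
  rw [← Nat.cast_add, ← Nat.card_sum]
  congr 1
  refine Nat.card_congr ((Equiv.subtypeEquivRight fun w => and_or_left).trans
    (subtypeOrEquiv _ _ ?_))
  exact disjoint_iff_inf_le.mpr fun w hw => h w hw.1.2 hw.2.2

lemma gf_nil : gf (· = []) = 1 := by
  ext n
  rw [gf, coeff_mk, coeff_one]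
  rcases n with _ | n
  · have : Unique (Words (· = []) 0) := ⟨⟨⟨[], rfl, rfl⟩⟩, fun w => Subtype.ext w.2.2⟩
    simp
  · have : IsEmpty (Words (· = []) (n + 1)) := ⟨fun w => by simpa [w.2.2] using w.2.1⟩
    simp

lemma card_words_glue {P Q : List Step → Prop} {d : Step} (hP : ∀ p, P p → IsDyck p)
    (hd : stepVal d = -1) (n : ℕ) :
    Nat.card (Words (fun w => ∃ p q, P p ∧ Q q ∧ w = glue d p q) (n + 1)) =
      ∑ ij ∈ antidiagonal n, Nat.card (Words P ij.1) * Nat.card (Words Q ij.2) := by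
  let φ : (Σ ij : antidiagonal n, Words P ij.1.1 × Words Q ij.1.2) →
      Words (fun w => ∃ p q, P p ∧ Q q ∧ w = glue d p q) (n + 1) :=
    fun ⟨⟨(i, j), hij⟩, p, q⟩ => ⟨glue d p q, by
      have := mem_antidiagonal.mp hij
      simp only [glue, length_cons, length_append, p.2.1, q.2.1]; omega, p, q, p.2.2, q.2.2, rfl⟩
  have hφ : φ.Bijective := by
    constructor
    · rintro ⟨⟨⟨i, j⟩, hij⟩, ⟨p, hpl, hp⟩, ⟨q, hql, hq⟩⟩
        ⟨⟨⟨i', j'⟩, hij'⟩, ⟨p', hpl', hp'⟩, ⟨q', hql', hq'⟩⟩ h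
      dsimp only at hpl hpl'
      obtain ⟨-, rfl, rfl⟩ := glue_inj (hP p hp) (hP p' hp') hd hd (congrArg Subtype.val h)
      obtain rfl : i = i' := by omega
      obtain rfl : j = j' := by
        have := mem_antidiagonal.mp hij; have := mem_antidiagonal.mp hij'; omega
      rfl
    · rintro ⟨w, hw, p, q, hp, hq, rfl⟩
      obtain ⟨i, hi⟩ := (hP p hp).even_length
      have hlen : p.length + q.length = 2 * n := by simp only [glue, length_cons, length_append] at hw; omega
      exact ⟨⟨⟨(i, n - i), mem_antidiagonal.mpr (by omega)⟩, ⟨p, by dsimp only; omega, hp⟩,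
        ⟨q, by dsimp only; omega, hq⟩⟩, rfl⟩
  rw [← Nat.card_eq_of_bijective φ hφ, Nat.card_sigma]
  simp only [Nat.card_prod]
  exact sum_coe_sort (antidiagonal n) fun ij => Nat.card (Words P ij.1) * Nat.card (Words Q ij.2)

lemma gf_glue {P Q : List Step → Prop} {d : Step} (hP : ∀ p, P p → IsDyck p)
    (hd : stepVal d = -1) :
    gf (fun w => ∃ p q, P p ∧ Q q ∧ w = glue d p q) = X * gf P * gf Q := by
  ext n
  rcases n with _ | n
  · have : IsEmpty (Words (fun w => ∃ p q, P p ∧ Q q ∧ w = glue d p q) 0) :=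
      ⟨fun ⟨w, hw, p, q, _, _, hpq⟩ => by simp [hpq, glue] at hw⟩
    rw [gf, coeff_mk, Nat.card_of_isEmpty]
    simp
  · rw [mul_assoc, coeff_succ_X_mul, coeff_mul, gf, coeff_mk, card_words_glue hP hd]
    simp [gf]

lemma gf_congr {P Q : List Step → Prop} (h : ∀ w, P w ↔ Q w) : gf P = gf Q :=
  congrArg gf (funext fun w => propext (h w))

lemma gf_eq_one_add_gf_ne_nil {P : List Step → Prop} (h : P []) :
    gf P = 1 + gf fun w => P w ∧ w ≠ [] := by
  rw [← gf_nil, ← gf_or fun w hw hne => hne.2 hw]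
  exact gf_congr fun w => ⟨fun hw => (eq_or_ne w []).imp_right (⟨hw, ·⟩),
    by rintro (rfl | hw); exacts [h, hw.1]⟩

lemma gf_nil_or_glue_or_glue {P Q P' Q' : List Step → Prop} (hP : ∀ p, P p → IsDyck p)
    (hP' : ∀ p, P' p → IsDyck p) :
    gf (fun w => w = [] ∨ (∃ p q, P p ∧ Q q ∧ w = glue D p q) ∨
        ∃ p q, P' p ∧ Q' q ∧ w = glue R p q) =
      1 + X * gf P * gf Q + X * gf P' * gf Q' := by
  rw [gf_or, gf_or, gf_nil, gf_glue hP rfl, gf_glue hP' rfl, add_assoc]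
  · rintro w ⟨p, q, hp, -, rfl⟩ ⟨p', q', hp', -, h⟩
    cases (glue_inj (hP p hp) (hP' p' hp') rfl rfl h).1
  · rintro w rfl (⟨p, q, -, -, h⟩ | ⟨p, q, -, -, h⟩) <;> exact glue_ne_nil h.symm

lemma gf_isDecoratedDyck :
    gf IsDecoratedDyck = 1 + X * gf IsDecoratedDyck * gf IsDecoratedDyck +
      X * gf fun w => IsDecoratedDyck w ∧ w ≠ [] := calc
  _ = _ := gf_congr fun _ => isDecoratedDyck_iff_glue
  _ = _ := by
    rw [gf_nil_or_glue_or_glue (fun _ => IsDecoratedDyck.isDyck) (fun _ hp => hp.1.isDyck),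
      gf_nil, mul_one]

lemma gf_isDecoratedDyck_and_not_hasPeakAtLevelOne :
    (gf fun w => IsDecoratedDyck w ∧ ¬ HasPeakAtLevelOne w) =
      1 + X * (gf fun w => IsDecoratedDyck w ∧ w ≠ []) *
        (gf fun w => IsDecoratedDyck w ∧ ¬ HasPeakAtLevelOne w) +
      X * gf fun w => IsDecoratedDyck w ∧ w ≠ [] := calc
  _ = _ := gf_congr fun _ => isDecoratedDyck_and_not_hasPeakAtLevelOne_iff_glue
  _ = _ := by
    rw [gf_nil_or_glue_or_glue (fun _ hp => hp.1.isDyck) (fun _ hp => hp.1.isDyck),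
      gf_nil, mul_one]

theorem A128723_algebraic_equation :
    (PowerSeries.X : PowerSeries ℤ) * (3 + PowerSeries.X) *
        (PowerSeries.mk fun n => (a n : ℤ)) ^ 2
      - 2 * (1 - PowerSeries.X ^ 2) * (PowerSeries.mk fun n => (a n : ℤ))
      + (PowerSeries.X - 1) * (PowerSeries.X - 2) = 0 := by
  have hB := gf_isDecoratedDyck
  rw [gf_eq_one_add_gf_ne_nil isDecoratedDyck_nil] at hB
  have hY := gf_isDecoratedDyck_and_not_hasPeakAtLevelOne
  set B' := gf fun w => IsDecoratedDyck w ∧ w ≠ []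
  set Y := gf fun w => IsDecoratedDyck w ∧ ¬ HasPeakAtLevelOne w
  change X * (3 + X) * Y ^ 2 - 2 * (1 - X ^ 2) * Y + (X - 1) * (X - 2) = 0
  linear_combination -X * (Y + 1) ^ 2 * hB + ((3 * X - 1 + X * B') * (Y + 1) + Y - 1) * hY
end

section
/- For every real z with 0 < z^2 < 1/5, set q = \sqrt{1 - 6z^2 + 5z^4}, r_1 = (1 + z^2 + q)/(2z), r_2 = (1 + z^2 - q)/(2z), and g_0 = (1 - 2z^4 - 3z^2 - q) / (2(z^2 + 3) z^2). Then g_0 satisfies the kernel equation z\,r_1\,g_0 = z^3 (r_2 - z) + z^2 (1 - z^2 + z r_2)\,g_0. -/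
theorem kernel_equation_g0 (z : ℝ) (hz0 : 0 < z ^ 2) (hz1 : z ^ 2 < 1 / 5) :
    let q := Real.sqrt (1 - 6 * z ^ 2 + 5 * z ^ 4)
    let r₁ := (1 + z ^ 2 + q) / (2 * z)
    let r₂ := (1 + z ^ 2 - q) / (2 * z)
    let g₀ := (1 - 2 * z ^ 4 - 3 * z ^ 2 - q) / (2 * (z ^ 2 + 3) * z ^ 2)
    z * r₁ * g₀ = z ^ 3 * (r₂ - z) + z ^ 2 * (1 - z ^ 2 + z * r₂) * g₀ := by
  intro q r₁ r₂ g₀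
  have hz : z ≠ 0 := by intro h; simp [h] at hz0
  have h3 : z ^ 2 + 3 ≠ 0 := by positivity
  have hd : (0:ℝ) ≤ 1 - 6 * z ^ 2 + 5 * z ^ 4 := by nlinarith
  have hq : q ^ 2 = 1 - 6 * z ^ 2 + 5 * z ^ 4 := Real.sq_sqrt hd
  show z * r₁ * g₀ = z ^ 3 * (r₂ - z) + z ^ 2 * (1 - z ^ 2 + z * r₂) * g₀
  simp only [r₁, r₂, g₀]
  field_simp
  linear_combination (-(1 + z ^ 2)) * hq
end

section
/- For every real z with 0 < z^2 < 1/5 and z^2 + 2z - 1 \ne 0, set q = \sqrt{1 - 6z^2 + 5z^4}, r_1 = (1 + z^2 + q)/(2z), and g_0 = (1 - 2z^4 - 3z^2 - q) / (2(z^2 + 3) z^2). Then \dfrac{z^4 + z^4 g_0 + z^2 g_0 - z^2 + 1}{z (r_1 - 1)} = \dfrac{-2z^5 - 3z^4 + z^3 - 5z^2 - 3z + 4 - (z^2 + 3z + 4)\,q}{2 z (3 + z^2)(z^2 + 2z - 1)}. (The left-hand side is the sum over j \ge 0 of the generating functions s_j of partial decorated paths ending at level j; the right-hand side is the closed form of S(z,1).)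 -/
/-!
Clearing the denominator of `g₀` collapses the numerator to
`(7 - 6z² - z⁴ - (z² + 1) q) / (2 (z² + 3))`, and `z (r₁ - 1) = ((1 - z)² + q) / 2`.
Rationalising with the conjugate `(1 - z)² - q` and using `q² = 1 - 6z² + 5z⁴` gives the
denominator `(1 - z)⁴ - q² = 4z (1 - z) (z² + 2z - 1)`, which is where the factor
`z² + 2z - 1` of the closed form comes from.
-/

namespace OpenEndedPaths

variable {K : Type*} [Field K]

def r₁ (z q : K) : K := (1 + z ^ 2 + q) / (2 * z)

def g₀ (z q : K) : K := (1 - 2 * z ^ 4 - 3 * z ^ 2 - q) / (2 * (z ^ 2 + 3) * z ^ 2)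

variable [NeZero (2 : K)]

theorem mul_r₁_sub_one {z : K} (hz : z ≠ 0) (q : K) :
    z * (r₁ z q - 1) = ((1 - z) ^ 2 + q) / 2 := by
  unfold r₁
  field_simp
  ring

theorem numerator_g₀_eq {z : K} (hz : z ≠ 0) (h3 : z ^ 2 + 3 ≠ 0) (q : K) :
    z ^ 4 + z ^ 4 * g₀ z q + z ^ 2 * g₀ z q - z ^ 2 + 1
      = (7 - 6 * z ^ 2 - z ^ 4 - (z ^ 2 + 1) * q) / (2 * (z ^ 2 + 3)) := by
  unfold g₀
  field_simp
  ring

theorem open_ended_sum_eq {z q : K} (hq : q ^ 2 = 1 - 6 * z ^ 2 + 5 * z ^ 4) (hz : z ≠ 0)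
    (h3 : z ^ 2 + 3 ≠ 0) (hconj : (1 - z) ^ 2 + q ≠ 0) (hz2 : z ^ 2 + 2 * z - 1 ≠ 0) :
    (z ^ 4 + z ^ 4 * g₀ z q + z ^ 2 * g₀ z q - z ^ 2 + 1) / (z * (r₁ z q - 1))
      = (-2 * z ^ 5 - 3 * z ^ 4 + z ^ 3 - 5 * z ^ 2 - 3 * z + 4 - (z ^ 2 + 3 * z + 4) * q)
        / (2 * z * (3 + z ^ 2) * (z ^ 2 + 2 * z - 1)) := by
  have hD : 2 * z * (3 + z ^ 2) * (z ^ 2 + 2 * z - 1) ≠ 0 := by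
    rw [add_comm 3]
    exact mul_ne_zero (mul_ne_zero (mul_ne_zero two_ne_zero hz) h3) hz2
  calc _ = (7 - 6 * z ^ 2 - z ^ 4 - (z ^ 2 + 1) * q) / ((z ^ 2 + 3) * ((1 - z) ^ 2 + q)) := by
        rw [numerator_g₀_eq hz h3, mul_r₁_sub_one hz]
        field_simp
    _ = _ := by
        rw [div_eq_div_iff (mul_ne_zero h3 hconj) hD]
        linear_combination (z ^ 2 + 3) * (z ^ 2 + 3 * z + 4) * hq

end OpenEndedPaths

theorem one_sub_six_sq_add_five_pow_four_pos {z : ℝ} (hz : z ^ 2 < 1 / 5) :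
    0 < 1 - 6 * z ^ 2 + 5 * z ^ 4 := by
  have hfactor : 1 - 6 * z ^ 2 + 5 * z ^ 4 = (1 - z ^ 2) * (1 - 5 * z ^ 2) := by ring
  rw [hfactor]
  exact mul_pos (by linarith) (by linarith)

open OpenEndedPaths in
theorem open_ended_paths_gf (z : ℝ) (hz0 : 0 < z ^ 2) (hz1 : z ^ 2 < 1 / 5)
    (hz2 : z ^ 2 + 2 * z - 1 ≠ 0) :
    let q := Real.sqrt (1 - 6 * z ^ 2 + 5 * z ^ 4)
    let r₁ := (1 + z ^ 2 + q) / (2 * z)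
    let g₀ := (1 - 2 * z ^ 4 - 3 * z ^ 2 - q) / (2 * (z ^ 2 + 3) * z ^ 2)
    (z ^ 4 + z ^ 4 * g₀ + z ^ 2 * g₀ - z ^ 2 + 1) / (z * (r₁ - 1))
      = (-2 * z ^ 5 - 3 * z ^ 4 + z ^ 3 - 5 * z ^ 2 - 3 * z + 4
          - (z ^ 2 + 3 * z + 4) * q)
        / (2 * z * (3 + z ^ 2) * (z ^ 2 + 2 * z - 1)) := by
  intro q r₁ g₀
  have hdisc := one_sub_six_sq_add_five_pow_four_pos hz1
  have hq : q ^ 2 = 1 - 6 * z ^ 2 + 5 * z ^ 4 := Real.sq_sqrt hdisc.le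
  have hconj : (1 - z) ^ 2 + q ≠ 0 :=
    (add_pos_of_nonneg_of_pos (sq_nonneg _) (Real.sqrt_pos.mpr hdisc)).ne'
  exact open_ended_sum_eq hq (by rintro rfl; norm_num at hz0) (by positivity) hconj hz2
end
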